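/- Let T be a tree of odd order n with Randić matrix R. Assuming R_{−1}(T) ≤ (5n+8)/18, that ±1 are eigenvalues of R, and that the nullity of R is at least 1, then RE(T) ≤ √((n−3)·(5n−10)/9) + 2. -/

import Mathlib

/-! The squared eigenvalues of `R` sum to `tr(R²) = 2 R₋₁(T)`. Setting aside the eigenvalues
`1`, `-1` and `0`, which contribute `2` to both the energy and this sum, Cauchy–Schwarz bounds
the remaining `n - 3` absolute eigenvalues by `√((n - 3) (2 R₋₁(T) - 2))`. -/

open scoped Classical

noncomputable def randicMatrix {V : Type*} [Fintype V] (G : SimpleGraph V)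
    [DecidableRel G.Adj] : Matrix V V ℝ :=
  fun u v =>
    if G.Adj u v then 1 / Real.sqrt ((G.degree u : ℝ) * (G.degree v : ℝ)) else 0

noncomputable def randicIndex {V : Type*} [Fintype V] (G : SimpleGraph V)
    [DecidableRel G.Adj] : ℝ :=
  (1 / 2) * ∑ u, ∑ v, if G.Adj u v then 1 / ((G.degree u : ℝ) * (G.degree v : ℝ)) else 0

open Finset Matrix

theorem Matrix.IsHermitian.trace_mul_self {𝕜 n : Type*} [RCLike 𝕜] [Fintype n] [DecidableEq n]
    {A : Matrix n n 𝕜} (hA : A.IsHermitian) :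
    (A * A).trace = ∑ i, (hA.eigenvalues i : 𝕜) ^ 2 := by
  conv_lhs => rw [hA.spectral_theorem, ← map_mul, Unitary.conjStarAlgAut_apply, trace_mul_cycle,
    ← mul_assoc, Unitary.coe_star_mul_self, one_mul, diagonal_mul_diagonal, trace_diagonal]
  simp [sq]

theorem Finset.sum_abs_le_sqrt_card_mul_sum_sq {ι : Type*} (s : Finset ι) (f : ι → ℝ) :
    ∑ x ∈ s, |f x| ≤ √(#s * ∑ x ∈ s, f x ^ 2) := by
  apply Real.le_sqrt_of_sq_le
  simpa only [sq_abs] using sq_sum_le_card_mul_sum_sq (s := s) (f := fun x => |f x|)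

theorem sum_abs_le_of_sum_sq_le {ι : Type*} [Fintype ι] {f : ι → ℝ} {B : ℝ}
    (hB : ∑ x, f x ^ 2 ≤ B) {i j k : ι} (hi : f i = 1) (hj : f j = -1) (hk : f k = 0) :
    ∑ x, |f x| ≤ √((Fintype.card ι - 3) * (B - 2)) + 2 := by
  have hij : i ≠ j := ne_of_apply_ne f (by norm_num [hi, hj])
  have hik : i ≠ k := ne_of_apply_ne f (by norm_num [hi, hk])
  have hjk : j ≠ k := ne_of_apply_ne f (by norm_num [hj, hk])
  set t : Finset ι := {i, j, k}
  have sum_t (g : ℝ → ℝ) : ∑ x ∈ t, g (f x) = g 1 + g (-1) + g 0 := by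
    rw [sum_insert (by simp [hij, hik]), sum_pair hjk, hi, hj, hk, add_assoc]
  have card_compl : (#tᶜ : ℝ) = Fintype.card ι - 3 := by
    rw [card_compl, card_insert_of_notMem (by simp [hij, hik]), card_pair hjk,
      Nat.cast_sub (by simpa [t, hij, hik, hjk] using card_le_univ t)]
    norm_num
  have sq_compl : ∑ x ∈ tᶜ, f x ^ 2 ≤ B - 2 := by
    have := sum_add_sum_compl t (fun x => f x ^ 2)
    linarith [sum_t (· ^ 2)]
  have abs_split := sum_add_sum_compl t (fun x => |f x|)
  rw [sum_t (|·|)] at abs_split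
  calc ∑ x, |f x| = ∑ x ∈ tᶜ, |f x| + 2 := by norm_num at abs_split; linarith
    _ ≤ √(#tᶜ * ∑ x ∈ tᶜ, f x ^ 2) + 2 := by grw [sum_abs_le_sqrt_card_mul_sum_sq]
    _ ≤ √((Fintype.card ι - 3) * (B - 2)) + 2 := by
        rw [← card_compl]; gcongr

section Randic

variable {V : Type*} [Fintype V] (G : SimpleGraph V) [DecidableRel G.Adj]

theorem randicMatrix_apply_mul_apply_symm (u v : V) :
    randicMatrix G u v * randicMatrix G v u =
      if G.Adj u v then 1 / ((G.degree u : ℝ) * G.degree v) else 0 := by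
  by_cases huv : G.Adj u v
  · have hdeg : (0 : ℝ) ≤ G.degree u * G.degree v := by positivity
    rw [randicMatrix, randicMatrix, if_pos huv, if_pos huv.symm, if_pos huv,
      mul_comm (G.degree v : ℝ), one_div_mul_one_div, Real.mul_self_sqrt hdeg]
  · simp [randicMatrix, huv]

theorem trace_randicMatrix_mul_self :
    (randicMatrix G * randicMatrix G).trace = 2 * randicIndex G := by
  simp only [Matrix.trace, Matrix.diag, Matrix.mul_apply, randicMatrix_apply_mul_apply_symm,
    randicIndex]
  ring

end Randic

theorem randic_energy_bound_tree_odd_general {V : Type*} [Fintype V]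
    (G : SimpleGraph V) [DecidableRel G.Adj] (n : ℕ)
    (hn : Fintype.card V = n)
    (hR : (randicMatrix G).IsHermitian)
    (hRI : randicIndex G ≤ (5 * (n : ℝ) + 8) / 18)
    (h1 : ∃ i, hR.eigenvalues i = 1) (hneg1 : ∃ i, hR.eigenvalues i = -1)
    (hnull : 1 ≤ (Finset.univ.filter fun i => hR.eigenvalues i = 0).card) :
    ∑ i, |hR.eigenvalues i| ≤
      Real.sqrt (((n : ℝ) - 3) * (5 * (n : ℝ) - 10) / 9) + 2 := by
  obtain ⟨i, hi⟩ := h1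
  obtain ⟨j, hj⟩ := hneg1
  obtain ⟨k, hk⟩ := card_pos.mp hnull
  have hsq : ∑ x, hR.eigenvalues x ^ 2 ≤ (5 * (n : ℝ) + 8) / 9 := by
    have := hR.trace_mul_self
    simp only [RCLike.ofReal_real_eq_id, id, trace_randicMatrix_mul_self] at this
    linarith
  have hbound := sum_abs_le_of_sum_sq_le hsq hi hj (mem_filter.mp hk).2
  rw [hn] at hbound
  convert hbound using 3
  ring

theorem randic_energy_bound_tree_odd {V : Type*} [Fintype V]
    (G : SimpleGraph V) [DecidableRel G.Adj] (n : ℕ)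
    (hn : Fintype.card V = n) (hodd : Odd n)
    (htree : G.IsTree)
    (hR : (randicMatrix G).IsHermitian)
    (hRI : randicIndex G ≤ (5 * (n : ℝ) + 8) / 18)
    (h1 : ∃ i, hR.eigenvalues i = 1) (hneg1 : ∃ i, hR.eigenvalues i = -1)
    (hnull : 1 ≤ (Finset.univ.filter fun i => hR.eigenvalues i = 0).card) :
    ∑ i, |hR.eigenvalues i| ≤
      Real.sqrt (((n : ℝ) - 3) * (5 * (n : ℝ) - 10) / 9) + 2 :=
  randic_energy_bound_tree_odd_general G n hn hR hRI h1 hneg1 hnull
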